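/- arXiv:1807.08908 — 2 statements merged into one kernel-verified Lean document; each statement's English description precedes it below -/
import Mathlib

section
/- Let ι : ℝ^k → ℝ^n × ℝ^n be a C² map whose pullback of the Gibbs form vanishes identically: writing ι(y) = (x(y), p(y)), assume ⟨p(y), Dx(y)v⟩ = 0 for all y ∈ ℝ^k and v ∈ ℝ^k. Then for every y ∈ ℝ^k, the rank of the derivative Dι(y) (the dimension of its range) is at most n. -/
/-!
If the pullback of `α = Σ pᵢ dxᵢ` vanishes, so does the pullback of `dα = Σ dpᵢ ∧ dxᵢ`:
differentiating `⟨p, Dx w⟩ = 0` in the direction `v` and using the symmetry of `D²x` gives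
`⟨Dp v, Dx w⟩ = ⟨Dp w, Dx v⟩`. So the range of `Dι(y)` is isotropic for the standard symplectic
form on `ℝⁿ × ℝⁿ`; as that form is nondegenerate, an isotropic subspace has dimension at most `n`.
-/

open Module Matrix

noncomputable def dotProductCLM (ι : Type*) [Fintype ι] : (ι → ℝ) →L[ℝ] (ι → ℝ) →L[ℝ] ℝ :=
  LinearMap.toContinuousLinearMap
    (LinearMap.toContinuousLinearMap.toLinearMap ∘ₗ dotProductBilin ℝ ℝ)

section SymplecticForm

variable (R ι : Type*) [CommRing R] [Fintype ι]

def symplecticForm : LinearMap.BilinForm R ((ι → R) × (ι → R)) :=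
  (dotProductBilin R R).compl₁₂ (LinearMap.snd R _ _) (LinearMap.fst R _ _) -
    (dotProductBilin R R).compl₁₂ (LinearMap.fst R _ _) (LinearMap.snd R _ _)

variable {R ι}

@[simp]
theorem symplecticForm_apply (u z : (ι → R) × (ι → R)) :
    symplecticForm R ι u z = u.2 ⬝ᵥ z.1 - u.1 ⬝ᵥ z.2 := rfl

theorem symplecticForm_isAlt : LinearMap.IsAlt (symplecticForm R ι) := fun u => by
  simp [dotProduct_comm u.2]

theorem symplecticForm_nondegenerate : (symplecticForm R ι).Nondegenerate := by
  classical
  refine symplecticForm_isAlt.isRefl.nondegenerate_iff_separatingLeft.mpr fun u hu => ?_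
  have h₁ : u.1 = 0 := dotProduct_eq_zero _ fun d => by simpa using hu (0, d)
  have h₂ : u.2 = 0 := dotProduct_eq_zero _ fun c => by simpa using hu (c, 0)
  exact Prod.ext h₁ h₂

end SymplecticForm

theorem LinearMap.BilinForm.two_mul_finrank_le_of_le_orthogonal {K V : Type*} [Field K]
    [AddCommGroup V] [Module K V] [FiniteDimensional K V] {B : LinearMap.BilinForm K V}
    (hB : B.Nondegenerate) {W : Submodule K V} (hW : W ≤ B.orthogonal W) :
    2 * finrank K W ≤ finrank K V := by
  have h₁ := B.finrank_orthogonal hB W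
  have h₂ := Submodule.finrank_mono hW
  have h₃ := W.finrank_le
  omega

section Pairing

variable {E F G H : Type*} [NormedAddCommGroup E] [NormedSpace ℝ E] [NormedAddCommGroup F]
  [NormedSpace ℝ F] [NormedAddCommGroup G] [NormedSpace ℝ G] [NormedAddCommGroup H]
  [NormedSpace ℝ H]

theorem ContinuousLinearMap.apply_fderiv_comm_of_apply_fderiv_eq_zero (B : F →L[ℝ] G →L[ℝ] H)
    {p : E → F} {x : E → G} {y : E} (hp : DifferentiableAt ℝ p y) (hx : ContDiffAt ℝ 2 x y)
    (h : ∀ y w, B (p y) (fderiv ℝ x y w) = 0) (v w : E) :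
    B (fderiv ℝ p y v) (fderiv ℝ x y w) = B (fderiv ℝ p y w) (fderiv ℝ x y v) := by
  have hx' : DifferentiableAt ℝ (fderiv ℝ x) y :=
    (hx.fderiv_right (m := 1) le_rfl).differentiableAt one_ne_zero
  have hderiv_zero : ∀ a b,
      B (fderiv ℝ p y a) (fderiv ℝ x y b) + B (p y) (fderiv ℝ (fderiv ℝ x) y a b) = 0 := by
    intro a b
    have hderiv := B.hasFDerivAt_of_bilinear hp.hasFDerivAt
      (hx'.hasFDerivAt.clm_apply (hasFDerivAt_const b y))
    have hzero : HasFDerivAt (fun z => B (p z) (fderiv ℝ x z b)) (0 : E →L[ℝ] H) y := by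
      simpa only [h] using hasFDerivAt_const (0 : H) y
    simpa [add_comm] using congr($(hderiv.unique hzero) a)
  have hsymm : fderiv ℝ (fderiv ℝ x) y v w = fderiv ℝ (fderiv ℝ x) y w v :=
    hx.isSymmSndFDerivAt (by simp [minSmoothness_of_isRCLikeNormedField]) v w
  have hvw := hderiv_zero v w
  rw [hsymm, ← hderiv_zero w v] at hvw
  exact add_right_cancel hvw

end Pairing

/-- If the pullback of the Gibbs form `α = Σ pᵢ dxᵢ` under a C² map
`ι : ℝ^k → ℝ^n × ℝ^n` vanishes identically, then the rank of `Dι(y)` is at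
most `n` (a system is a Lagrangian submanifold of dimension at most `n`). -/
theorem rank_le_of_pullback_gibbs_vanishes
    (n k : ℕ)
    (ι : (Fin k → ℝ) → (Fin n → ℝ) × (Fin n → ℝ))
    (hι : ContDiff ℝ 2 ι)
    (x : (Fin k → ℝ) → (Fin n → ℝ)) (p : (Fin k → ℝ) → (Fin n → ℝ))
    (hx : ∀ y, x y = (ι y).1) (hp : ∀ y, p y = (ι y).2)
    (hpull : ∀ (y : Fin k → ℝ) (v : Fin k → ℝ),
      ∑ i, p y i * fderiv ℝ x y v i = 0) :
    ∀ y : Fin k → ℝ,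
      Module.finrank ℝ (LinearMap.range (fderiv ℝ ι y : (Fin k → ℝ) →ₗ[ℝ] (Fin n → ℝ) × (Fin n → ℝ))) ≤ n := by
  intro y
  have hxC : ContDiff ℝ 2 x := by
    rw [show x = Prod.fst ∘ ι from funext hx]
    exact contDiff_fst.comp hι
  have hpC : ContDiff ℝ 2 p := by
    rw [show p = Prod.snd ∘ ι from funext hp]
    exact contDiff_snd.comp hι
  have hDι : fderiv ℝ ι y = (fderiv ℝ x y).prod (fderiv ℝ p y) := by
    rw [show ι = fun y => (x y, p y) from funext fun y => by rw [hx, hp]]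
    exact (hxC.differentiable two_ne_zero y).fderiv_prodMk (hpC.differentiable two_ne_zero y)
  have hcomm : ∀ v w, fderiv ℝ p y v ⬝ᵥ fderiv ℝ x y w = fderiv ℝ p y w ⬝ᵥ fderiv ℝ x y v :=
    (dotProductCLM (Fin n)).apply_fderiv_comm_of_apply_fderiv_eq_zero
      (hpC.differentiable two_ne_zero y) hxC.contDiffAt hpull
  set W := LinearMap.range (fderiv ℝ ι y : (Fin k → ℝ) →ₗ[ℝ] (Fin n → ℝ) × (Fin n → ℝ))
  have hiso : W ≤ (symplecticForm ℝ (Fin n)).orthogonal W := by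
    rintro _ ⟨w, rfl⟩ _ ⟨v, rfl⟩
    show symplecticForm ℝ (Fin n) (fderiv ℝ ι y v) (fderiv ℝ ι y w) = 0
    rw [symplecticForm_apply, hDι, ContinuousLinearMap.prod_apply, ContinuousLinearMap.prod_apply,
      hcomm, dotProduct_comm, sub_self]
  have h2W :=
    LinearMap.BilinForm.two_mul_finrank_le_of_le_orthogonal symplecticForm_nondegenerate hiso
  rw [Module.finrank_prod, Module.finrank_fin_fun] at h2W
  omega
end

section
/- Let S, p̄, μ : ℝ³ → ℝ be differentiable functions of (T,V,N), and define F : ℝ³ → ℝ by F(T,V,N) = p̄(T,V,N)·V + μ(T,V,N)·N. Then the following are equivalent: (i) the pullback of the Gibbs form under the embedding ι(T,V,N) = ((T, p̄(T,V,N), μ(T,V,N)), (S(T,V,N), V, N)) ∈ ℝ³ × ℝ³ vanishes, i.e. for all (T,V,N) and all (a,b,c) ∈ ℝ³: S(T,V,N)·a + V·(Dp̄(T,V,N)(a,b,c)) + N·(Dμ(T,V,N)(a,b,c)) = 0; (ii) the Gibbs relations hold: ∂F/∂T = −S, ∂F/∂V = p̄, and ∂F/∂N = μ at every point of ℝ³,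 where partial derivatives are directional derivatives along the standard basis vectors. -/
private lemma clm_decomp (L : (ℝ × ℝ × ℝ) →L[ℝ] ℝ) (v : ℝ × ℝ × ℝ) :
    L v = v.1 * L (1, 0, 0) + v.2.1 * L (0, 1, 0) + v.2.2 * L (0, 0, 1) := by
  have hv : v = v.1 • ((1:ℝ), (0:ℝ), (0:ℝ)) + v.2.1 • ((0:ℝ), (1:ℝ), (0:ℝ))
      + v.2.2 • ((0:ℝ), (0:ℝ), (1:ℝ)) := by
    simp [Prod.ext_iff]
  conv_lhs => rw [hv]
  simp only [map_add, map_smul, smul_eq_mul]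

/-- Equations (16)–(17): for differentiable `S, p̄, μ` as functions of `(T,V,N)`
and the Helmholtz potential `F = p̄·V + μ·N`, the Gibbs-Duhem relation (vanishing
of the pullback of the Gibbs form under
`ι(T,V,N) = ((T, p̄, μ), (S, V, N))`) is equivalent to the Gibbs relations
`∂F/∂T = −S`, `∂F/∂V = p̄`, `∂F/∂N = μ`. -/
theorem gibbs_duhem_iff_gibbs_relations
    (S Pbar μ : ℝ × ℝ × ℝ → ℝ)
    (hS : Differentiable ℝ S) (hPbar : Differentiable ℝ Pbar)
    (hμ : Differentiable ℝ μ)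
    (F : ℝ × ℝ × ℝ → ℝ)
    (hF : ∀ z : ℝ × ℝ × ℝ, F z = Pbar z * z.2.1 + μ z * z.2.2) :
    (∀ (z : ℝ × ℝ × ℝ) (v : ℝ × ℝ × ℝ),
        S z * v.1 + z.2.1 * fderiv ℝ Pbar z v + z.2.2 * fderiv ℝ μ z v = 0)
      ↔
    (∀ z : ℝ × ℝ × ℝ,
        fderiv ℝ F z (1, 0, 0) = -S z ∧
        fderiv ℝ F z (0, 1, 0) = Pbar z ∧
        fderiv ℝ F z (0, 0, 1) = μ z) := by
  have hF2 : F = fun z => Pbar z * z.2.1 + μ z * z.2.2 := funext hF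
  set L1 : (ℝ × ℝ × ℝ) →L[ℝ] ℝ :=
    (ContinuousLinearMap.fst ℝ ℝ ℝ).comp (ContinuousLinearMap.snd ℝ ℝ (ℝ × ℝ)) with hL1
  set L2 : (ℝ × ℝ × ℝ) →L[ℝ] ℝ :=
    (ContinuousLinearMap.snd ℝ ℝ ℝ).comp (ContinuousLinearMap.snd ℝ ℝ (ℝ × ℝ)) with hL2
  have hder : ∀ z : ℝ × ℝ × ℝ,
      HasFDerivAt F (Pbar z • L1 + z.2.1 • fderiv ℝ Pbar z
        + (μ z • L2 + z.2.2 • fderiv ℝ μ z)) z := by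
    intro z
    rw [hF2]
    exact ((hPbar z).hasFDerivAt.mul L1.hasFDerivAt).add
      ((hμ z).hasFDerivAt.mul L2.hasFDerivAt)
  have hF' : ∀ (z v : ℝ × ℝ × ℝ),
      fderiv ℝ F z v = Pbar z * v.2.1 + z.2.1 * fderiv ℝ Pbar z v
        + (μ z * v.2.2 + z.2.2 * fderiv ℝ μ z v) := by
    intro z v
    rw [(hder z).fderiv]
    simp [hL1, hL2, smul_eq_mul]
  constructor
  · intro h z
    have h1 := h z (1, 0, 0)
    have h2 := h z (0, 1, 0)
    have h3 := h z (0, 0, 1)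
    norm_num at h1 h2 h3
    refine ⟨?_, ?_, ?_⟩ <;> rw [hF'] <;> norm_num <;> linarith
  · intro h z v
    obtain ⟨h1, h2, h3⟩ := h z
    rw [hF'] at h1 h2 h3
    norm_num at h1 h2 h3
    rw [clm_decomp (fderiv ℝ Pbar z) v, clm_decomp (fderiv ℝ μ z) v]
    linear_combination v.1 * h1 + v.2.1 * h2 + v.2.2 * h3
end
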